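/- For every natural number k and m ≥ 2, R'_m(m+k) ≤ 1 + (m^k - 1)/(m - 1): every m-edge-coloured complete graph on 1 + (m^k-1)/(m-1) vertices contains monochromatic cliques A_1,...,A_m, one of each colour, with |A_1| + ... + |A_m| ≥ m + k. -/

import Mathlib

/-!
Induction on `k`, with `N_k = 1 + (1 + m + ⋯ + m^(k-1))` vertices, so that
`N_{k+1} - 1 = m (N_k - 1) + 1`.
A single vertex in every colour handles `k = 0`. For the step, pick a vertex `v`: by pigeonhole,
more than `m (N_k - 1)` other vertices force some colour `i` to join `v` to at least `N_k` of them.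
Cliques found inside that colour-`i` neighbourhood stay cliques after adding `v` to the one of
colour `i`, which raises the total size by one.
-/

/-- `A` spans a complete subgraph all of whose edges have colour `i` under the
edge-colouring `c` of the complete graph. -/
def MonoClique {V : Type*} {m : ℕ} (c : Sym2 V → Fin m) (i : Fin m) (A : Finset V) : Prop :=
  ∀ a ∈ A, ∀ b ∈ A, a ≠ b → c s(a, b) = i

open Finset

namespace MonoClique

variable {V : Type*} {m : ℕ} {c : Sym2 V → Fin m} {i : Fin m}

theorem singleton (v : V) : MonoClique c i {v} := by
  intro a ha b hb hab
  rw [mem_singleton] at ha hb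
  exact absurd (ha.trans hb.symm) hab

theorem insert [DecidableEq V] {A : Finset V} {v : V} (hA : MonoClique c i A)
    (hv : ∀ w ∈ A, c s(v, w) = i) : MonoClique c i (insert v A) := by
  intro a ha b hb hab
  rcases mem_insert.mp ha with rfl | haA <;> rcases mem_insert.mp hb with rfl | hbA
  · exact absurd rfl hab
  · exact hv b hbA
  · rw [Sym2.eq_swap]; exact hv a haA
  · exact hA a haA b hbA hab

end MonoClique

theorem sum_card_update_insert {ι V : Type*} [Fintype ι] [DecidableEq ι] [DecidableEq V]
    (A : ι → Finset V) (i : ι) {v : V} (hv : v ∉ A i) :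
    ∑ j, #(Function.update A i (insert v (A i)) j) = ∑ j, #(A j) + 1 := by
  simp_rw [Function.apply_update (fun _ ↦ Finset.card), sum_update_of_mem (mem_univ i),
    card_insert_of_notMem hv, sum_eq_add_sum_sdiff_singleton_of_mem (mem_univ i) (fun j ↦ #(A j))]
  ring

theorem exists_monoCliques_of_geomSum_lt_card {V : Type*} [DecidableEq V] {m : ℕ}
    (c : Sym2 V → Fin m) (k : ℕ) {s : Finset V} (hs : ∑ j ∈ range k, m ^ j < #s) :
    ∃ A : Fin m → Finset V,
      (∀ i, A i ⊆ s) ∧ (∀ i, MonoClique c i (A i)) ∧ m + k ≤ ∑ i, #(A i) := by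
  induction k generalizing s with
  | zero =>
    obtain ⟨v, hv⟩ := card_pos.mp (by simpa using hs)
    exact ⟨fun _ ↦ {v}, fun _ ↦ by simpa, fun _ ↦ .singleton v, by simp⟩
  | succ k ih =>
    set q := ∑ j ∈ range k, m ^ j
    have hq : ∑ j ∈ range (k + 1), m ^ j = m * q + 1 := by
      rw [sum_range_succ', mul_sum]; simp [pow_succ']
    obtain ⟨v, hv⟩ := card_pos.mp (show 0 < #s by omega)
    have hrest : #(univ : Finset (Fin m)) * q < #(s.erase v) := by
      rw [card_erase_of_mem hv, card_fin]; omega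
    obtain ⟨i, -, hi⟩ := exists_lt_card_fiber_of_mul_lt_card_of_maps_to
      (fun w _ ↦ mem_univ (c s(v, w))) hrest
    obtain ⟨A, hAsub, hAmono, hAcard⟩ := ih hi
    have hAs : ∀ j, A j ⊆ s := fun j ↦
      (hAsub j).trans ((filter_subset _ _).trans (erase_subset _ _))
    have hvA : v ∉ A i := fun h ↦ notMem_erase v s (mem_of_mem_filter v (hAsub i h))
    have hcol : ∀ w ∈ A i, c s(v, w) = i := fun w hw ↦ (mem_filter.mp (hAsub i hw)).2
    refine ⟨Function.update A i (insert v (A i)), ?_, ?_, ?_⟩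
    · rw [Function.forall_update_iff _ fun j B ↦ B ⊆ s]
      exact ⟨insert_subset hv (hAs i), fun j _ ↦ hAs j⟩
    · rw [Function.forall_update_iff _ fun j B ↦ MonoClique c j B]
      exact ⟨(hAmono i).insert hcol, fun j _ ↦ hAmono j⟩
    · rw [sum_card_update_insert A i hvA]; omega

/-- `R'_m(m+k) ≤ 1 + (m^k - 1)/(m-1)` for `m ≥ 2`: every `m`-edge-coloured complete
graph on `1 + (m^k - 1)/(m-1)` vertices contains monochromatic cliques, one of each
colour, of total size at least `m + k`. -/
theorem Rprime_multicolour_bound (m : ℕ) (hm : 2 ≤ m) (k : ℕ)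
    (c : Sym2 (Fin (1 + (m ^ k - 1) / (m - 1))) → Fin m) :
    ∃ A : Fin m → Finset (Fin (1 + (m ^ k - 1) / (m - 1))),
      (∀ i, MonoClique c i (A i)) ∧ m + k ≤ ∑ i, (A i).card := by
  have hcard : ∑ j ∈ range k, m ^ j < #(univ : Finset (Fin (1 + (m ^ k - 1) / (m - 1)))) := by
    rw [card_univ, Fintype.card_fin, Nat.geomSum_eq hm]; omega
  obtain ⟨A, -, hmono, hsum⟩ := exists_monoCliques_of_geomSum_lt_card c k hcard
  exact ⟨A, hmono, hsum⟩
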